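/- Let m ≥ 2 and n ≥ 1 be integers and a an integer with gcd(a, mn) = 1 (and mn ≥ 2). Then C_m(a) divides n · C_{mn}(a). -/

import Mathlib

/-!
Identifying `λ(m)` with the exponent of `(ZMod m)ˣ`, surjectivity of `(ZMod (m * n))ˣ → (ZMod m)ˣ`
gives `λ(m) ∣ λ(mn)`, hence `a ^ λ(m) - 1 ∣ a ^ λ(mn) - 1`. Dividing both sides by `m` turns this
into `C_m(a) ∣ (a ^ λ(mn) - 1) / m = n * C_{mn}(a)`.
-/

/-- The Carmichael function `λ(m)`: the smallest positive integer `n` such that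
`a ^ n ≡ 1 (mod m)` for every integer `a` coprime to `m`. -/
noncomputable def carmichael (m : ℕ) : ℕ :=
  sInf {n : ℕ | 0 < n ∧ ∀ a : ℤ, Int.gcd a m = 1 → a ^ n ≡ 1 [ZMOD (m : ℤ)]}

/-- The Carmichael quotient `C_m(a) = (a^{λ(m)} - 1) / m`. -/
noncomputable def carQuot (m : ℕ) (a : ℤ) : ℤ := (a ^ carmichael m - 1) / m

theorem isUnit_intCast_zmod_iff_gcd_eq_one {m : ℕ} {a : ℤ} :
    IsUnit (a : ZMod m) ↔ Int.gcd a m = 1 := by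
  rw [ZMod.coe_int_isUnit_iff_isCoprime, isCoprime_comm, Int.isCoprime_iff_gcd_eq_one]

theorem forall_pow_modEq_one_iff_exponent_dvd {m k : ℕ} :
    (∀ a : ℤ, Int.gcd a m = 1 → a ^ k ≡ 1 [ZMOD m]) ↔ Monoid.exponent (ZMod m)ˣ ∣ k := by
  simp_rw [Monoid.exponent_dvd_iff_forall_pow_eq_one, ← isUnit_intCast_zmod_iff_gcd_eq_one,
    ← ZMod.intCast_eq_intCast_iff, Int.cast_pow, Int.cast_one]
  constructor
  · intro h u
    ext
    simpa using h (u : ZMod m).cast (by rw [ZMod.intCast_zmod_cast]; exact u.isUnit)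
  · intro h a ha
    simpa using congrArg Units.val (h ha.unit)

theorem carmichael_eq_exponent (m : ℕ) [NeZero m] : carmichael m = Monoid.exponent (ZMod m)ˣ := by
  simp_rw [carmichael, forall_pow_modEq_one_iff_exponent_dvd]
  have hpos : 0 < Monoid.exponent (ZMod m)ˣ := Nat.pos_of_ne_zero Monoid.exponent_ne_zero_of_finite
  exact le_antisymm (Nat.sInf_le ⟨hpos, dvd_rfl⟩)
    (le_csInf ⟨_, hpos, dvd_rfl⟩ fun k hk => Nat.le_of_dvd hk.1 hk.2)

theorem pow_carmichael_modEq_one {m : ℕ} [NeZero m] {a : ℤ} (ha : Int.gcd a m = 1) :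
    a ^ carmichael m ≡ 1 [ZMOD m] :=
  forall_pow_modEq_one_iff_exponent_dvd.mpr (carmichael_eq_exponent m).symm.dvd a ha

theorem carmichael_dvd_carmichael {m m' : ℕ} [NeZero m'] (h : m ∣ m') :
    carmichael m ∣ carmichael m' := by
  have : NeZero m := ⟨fun h0 => NeZero.ne m' (Nat.eq_zero_of_zero_dvd (h0 ▸ h))⟩
  rw [carmichael_eq_exponent, carmichael_eq_exponent]
  exact MonoidHom.exponent_dvd (ZMod.unitsMap_surjective h)

theorem Int.ediv_dvd_mul_ediv_mul {m n x y : ℤ} (hx : m ∣ x) (hy : m * n ∣ y) (hxy : x ∣ y) :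
    x / m ∣ n * (y / (m * n)) := by
  obtain rfl | hm := eq_or_ne m 0
  · simp
  obtain ⟨c, rfl⟩ := hy
  rcases eq_or_ne n 0 with rfl | hn
  · simp
  rw [Int.mul_ediv_cancel_left _ (mul_ne_zero hm hn)]
  simpa [mul_assoc, Int.mul_ediv_cancel_left _ hm] using Int.ediv_dvd_ediv hx hxy

theorem stmt5 (m n : ℕ) (hm : 2 ≤ m) (hn : 1 ≤ n) (a : ℤ) (ha : Int.gcd a (m * n) = 1) :
    carQuot m a ∣ (n : ℤ) * carQuot (m * n) a := by
  have : NeZero m := ⟨by omega⟩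
  have : NeZero n := ⟨by omega⟩
  have ham : Int.gcd a m = 1 := Nat.eq_one_of_dvd_one (ha ▸ Int.gcd_dvd_gcd_mul_right_right a m n)
  have hm_dvd : (m : ℤ) ∣ a ^ carmichael m - 1 := (pow_carmichael_modEq_one ham).symm.dvd
  have hmn_dvd : (m * n : ℤ) ∣ a ^ carmichael (m * n) - 1 := by
    exact_mod_cast (pow_carmichael_modEq_one ha).symm.dvd
  have hpow_dvd : a ^ carmichael m - 1 ∣ a ^ carmichael (m * n) - 1 :=
    dvd_pow_sub_one_of_dvd (carmichael_dvd_carmichael (dvd_mul_right m n))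
  unfold carQuot
  push_cast
  exact Int.ediv_dvd_mul_ediv_mul hm_dvd hmn_dvd hpow_dvd
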